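/- arXiv:2605.13780 — 2 statements merged into one kernel-verified Lean document; each statement's English description precedes it below -/
import Mathlib

section
/- (Correctness of the 3-SAT-to-lock-coverability construction.) Let φ = C₁ ∧ … ∧ C_n be a 3-CNF formula over propositional variables V, with literals Lit = V ∪ {¬x : x ∈ V}. For each literal l ∈ Lit and each i ∈ {1,…,n}, let m_i^l be a distinct lock. For each i ∈ {1,…,n}, let thread i be the nondeterministic sequential program that first chooses a literal l occurring in C_i, then executes acq(m_i^l), then for each j ≠ i (in increasing order of j) executes acq(m_j^{¬l}) followed by rel(m_j^{¬l}), and finally reaches a distinguished final location ℓ_i. Then there exists an interleaved execution τ̂ of the n threads (each thread's projection τ̂↑i being a complete run of thread i, ending at ℓ_i) satisfying the lock predicate sync_lk(τ̂), if and only if φ is satisfiable. -/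
/-!
Common definitions: control flow graphs, traces, interleavings of parameterized
programs, the covering preorder, Mazurkiewicz reductions, atomic fusions,
sync-point instrumentations, locks and general synchronization alphabets.
-/

/-- `PathRel E ℓ w ℓ'` : the word `w` labels a path from `ℓ` to `ℓ'` in the
labeled graph with edge relation `E`. -/
inductive PathRel {L α : Type} (E : L → α → L → Prop) : L → List α → L → Prop
  | nil (ℓ : L) : PathRel E ℓ [] ℓ
  | cons {ℓ ℓ' ℓ'' : L} {a : α} {w : List α} :
      E ℓ a ℓ' → PathRel E ℓ' w ℓ'' → PathRel E ℓ (a :: w) ℓ''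

/-- A control flow graph over the alphabet `α`. -/
structure CFG (α : Type) where
  Loc : Type
  loc_finite : Finite Loc
  Edge : Loc → α → Loc → Prop
  init : Loc
  exit : Loc
  init_ne_exit : init ≠ exit

namespace CFG

variable {α : Type}

/-- The set of words labeling paths from the initial to the exit location. -/
def traces (G : CFG α) : Set (List α) := { w | PathRel G.Edge G.init w G.exit }

/-- The set of actions occurring in `G`. -/
def alphabet (G : CFG α) : Set α := { a | ∃ ℓ ℓ', G.Edge ℓ a ℓ' }

/-- Action `a` labels at most one edge of `G`. -/
def UniqueAct (G : CFG α) (a : α) : Prop :=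
  ∀ ⦃ℓ₁ ℓ₁' ℓ₂ ℓ₂' : G.Loc⦄, G.Edge ℓ₁ a ℓ₁' → G.Edge ℓ₂ a ℓ₂' → ℓ₁ = ℓ₂ ∧ ℓ₁' = ℓ₂'

/-- The transition relation is finite. -/
def EdgeFinite (G : CFG α) : Prop :=
  { p : G.Loc × α × G.Loc | G.Edge p.1 p.2.1 p.2.2 }.Finite

/-- Every location is reachable from the initial location, and the exit
location is reachable from every location. -/
def Reachable (G : CFG α) : Prop :=
  ∀ ℓ : G.Loc, (∃ w, PathRel G.Edge G.init w ℓ) ∧ (∃ w, PathRel G.Edge ℓ w G.exit)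

/-- Well-formedness of a CFG over a plain alphabet (finitely many transitions,
reachability conditions, and every action labels at most one edge). -/
def WF (G : CFG α) : Prop := G.EdgeFinite ∧ G.Reachable ∧ ∀ a : α, G.UniqueAct a

end CFG

/-! ### Interleavings -/

/-- `τ↑i` : the projection of an interleaving to the actions of thread `i`. -/
def projThread {α : Type} (i : ℕ) (τ : List (α × ℕ)) : List α :=
  (τ.filter (fun x => x.2 == i)).map Prod.fst

/-- The interleavings of the parameterized program with thread template `G`
and no synchronization. -/
def progLang {α : Type} (G : CFG α) : Set (List (α × ℕ)) :=
  { τ | ∀ i : ℕ, projThread i τ ∈ G.traces ∨ projThread i τ = [] }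

/-- One swap of two adjacent commuting indexed actions of different threads. -/
def SwapStep {α : Type} (I : Set (α × α)) (τ τ' : List (α × ℕ)) : Prop :=
  ∃ (ρ σ : List (α × ℕ)) (a b : α) (i j : ℕ),
    (a, b) ∈ I ∧ i ≠ j ∧
      τ = ρ ++ (a, i) :: (b, j) :: σ ∧ τ' = ρ ++ (b, j) :: (a, i) :: σ

/-- The covering preorder `⊑_I`: the smallest reflexive-transitive relation
allowing swaps of adjacent `I`-commuting actions of different threads. -/
def CoveredBy {α : Type} (I : Set (α × α)) : List (α × ℕ) → List (α × ℕ) → Prop :=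
  Relation.ReflTransGen (SwapStep I)

/-- `L₁` is a Mazurkiewicz reduction (up to `I`) of `L₂`. -/
def MazReduction {α : Type} (I : Set (α × α)) (L₁ L₂ : Set (List (α × ℕ))) : Prop :=
  L₁ ⊆ L₂ ∧ ∀ τ ∈ L₂, ∃ τ' ∈ L₁, CoveredBy I τ τ'

/-! ### Morphisms -/

/-- Image of a word under a morphism `μ : α → 𝒫(β^*)`. -/
def morphWord {α β : Type} (μ : α → Set (List β)) : List α → Set (List β)
  | [] => {[]}
  | x :: w => { s | ∃ u ∈ μ x, ∃ v ∈ morphWord μ w, s = u ++ v }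

/-- Image of a language under a morphism. -/
def morphLang {α β : Type} (μ : α → Set (List β)) (L : Set (List α)) : Set (List β) :=
  ⋃ w ∈ L, morphWord μ w

/-! ### Atomic fusions -/

/-- Locations of the graph obtained from `G'` by substituting `Gβ k` for the
edge labeled `β k`: locations of `G'` together with the interior locations of
each `Gβ k`. -/
def fuseLoc {α : Type} (G' : CFG α) {n : ℕ} (Gβ : Fin n → CFG α) : Type :=
  G'.Loc ⊕ Σ k : Fin n, { ℓ : (Gβ k).Loc // ℓ ≠ (Gβ k).init ∧ ℓ ≠ (Gβ k).exit }

open Classical in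
/-- Embedding of the locations of `Gβ k` into the substituted graph, identifying
the initial and exit locations of `Gβ k` with the endpoints of the `β k` edge. -/
noncomputable def fuseEmb {α : Type} (G' : CFG α) {n : ℕ} (Gβ : Fin n → CFG α)
    (src tgt : Fin n → G'.Loc) (k : Fin n) (ℓ : (Gβ k).Loc) : fuseLoc G' Gβ :=
  if h1 : ℓ = (Gβ k).init then Sum.inl (src k)
  else if h2 : ℓ = (Gβ k).exit then Sum.inl (tgt k)
  else Sum.inr ⟨k, ℓ, h1, h2⟩

/-- Edges of the graph obtained from `G'` by substituting each `Gβ k` for the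
edge labeled `β k` (with endpoints `src k`, `tgt k`). -/
def fuseEdge {α : Type} (G' : CFG α) {n : ℕ} (β : Fin n → α) (Gβ : Fin n → CFG α)
    (src tgt : Fin n → G'.Loc) (x : fuseLoc G' Gβ) (a : α) (y : fuseLoc G' Gβ) : Prop :=
  (∃ ℓ ℓ', G'.Edge ℓ a ℓ' ∧ (∀ k, a ≠ β k) ∧ x = Sum.inl ℓ ∧ y = Sum.inl ℓ') ∨
  (∃ k ℓ ℓ', (Gβ k).Edge ℓ a ℓ' ∧
      x = fuseEmb G' Gβ src tgt k ℓ ∧ y = fuseEmb G' Gβ src tgt k ℓ')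

/-- An atomic fusion `F = (G', (β 0, Gβ 0), …, (β (n-1), Gβ (n-1)))` of the CFG `G`:
`G` is (up to isomorphism) obtained from `G'` by replacing, for each `k`, the unique
edge labeled `β k` by the graph `Gβ k`. -/
structure AtomicFusion {α : Type} (G : CFG α) (n : ℕ) where
  G' : CFG α
  β : Fin n → α
  Gβ : Fin n → CFG α
  β_inj : Function.Injective β
  src : Fin n → G'.Loc
  tgt : Fin n → G'.Loc
  β_edge : ∀ k, G'.Edge (src k) (β k) (tgt k)
  Gβ_alph : ∀ k a, a ∈ (Gβ k).alphabet → ∀ k', a ≠ β k'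
  Gβ_nonempty : ∀ k, ((Gβ k).traces).Nonempty
  iso : G.Loc ≃ fuseLoc G' Gβ
  iso_init : iso G.init = Sum.inl G'.init
  iso_exit : iso G.exit = Sum.inl G'.exit
  iso_edge : ∀ ℓ a ℓ', G.Edge ℓ a ℓ' ↔ fuseEdge G' β Gβ src tgt (iso ℓ) a (iso ℓ')

namespace AtomicFusion

variable {α : Type} {G : CFG α} {n : ℕ}

/-- The fusion morphism `μ_F`: maps each block symbol `β k` to `traces (Gβ k)`
and any other action `a` to `{[a]}`. -/
def morph (F : AtomicFusion G n) (a : α) : Set (List α) :=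
  { w | (∃ k, a = F.β k ∧ w ∈ (F.Gβ k).traces) ∨ ((∀ k, a ≠ F.β k) ∧ w = [a]) }

/-- The lift `μ̂_F` of the fusion morphism to indexed actions. -/
def morphIdx (F : AtomicFusion G n) (x : α × ℕ) : Set (List (α × ℕ)) :=
  { w | ∃ u ∈ F.morph x.1, w = u.map (fun a => (a, x.2)) }

/-- Soundness of an atomic fusion wrt. the commutativity relation `I`:
`μ̂_F(L(G'))` is a Mazurkiewicz reduction (up to `I`) of `L(G)`. -/
def Sound (F : AtomicFusion G n) (I : Set (α × α)) : Prop :=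
  MazReduction I (morphLang F.morphIdx (progLang F.G')) (progLang G)

end AtomicFusion

/-! ### Movers -/

/-- `a` is a left-mover if `(b, a) ∈ I` for all `b ∈ Σ(G)`. -/
def LeftMover {α : Type} (G : CFG α) (I : Set (α × α)) (a : α) : Prop :=
  ∀ b ∈ G.alphabet, (b, a) ∈ I

/-- `a` is a right-mover if `(a, b) ∈ I` for all `b ∈ Σ(G)`. -/
def RightMover {α : Type} (G : CFG α) (I : Set (α × α)) (a : α) : Prop :=
  ∀ b ∈ G.alphabet, (a, b) ∈ I

/-! ### Sync-points -/

/-- The word `⟨•:t₁⟩ … ⟨•:t_n⟩` where `T = {t₁ < … < t_n}`; the sync-point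
symbol `•` is represented by `none`. -/
def bulletWord {α : Type} (T : Finset ℕ) : List (Option α × ℕ) :=
  (T.sort (· ≤ ·)).map (fun t => ((none : Option α), t))

/-- A concatenation of words, each of which either consists of program actions
of threads in `T` only, or equals `⟨•:T⟩`. -/
inductive PhaseWord {α : Type} (T : Finset ℕ) : List (Option α × ℕ) → Prop
  | nil : PhaseWord T []
  | act {w τ : List (Option α × ℕ)} :
      (∀ x ∈ w, (∃ a : α, x.1 = some a) ∧ x.2 ∈ T) → PhaseWord T τ → PhaseWord T (w ++ τ)
  | bullet {τ : List (Option α × ℕ)} : PhaseWord T τ → PhaseWord T (bulletWord T ++ τ)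

/-- `sync_{•,T}`: while the threads in `T` are running they pass sync-points
together; at some point a subset `T' ⊊ T` of threads remains. -/
inductive SyncT {α : Type} : Finset ℕ → List (Option α × ℕ) → Prop
  | base : SyncT ∅ []
  | step {T T' : Finset ℕ} {τ₁ τ₂ : List (Option α × ℕ)} :
      T' ⊂ T → PhaseWord T τ₁ → SyncT T' τ₂ → SyncT T (τ₁ ++ τ₂)

/-- `sync_•(τ̂)` : there is a finite set `T ⊆ ℕ` with `sync_{•,T}(τ̂)`. -/
def SyncBullet {α : Type} (τ : List (Option α × ℕ)) : Prop := ∃ T : Finset ℕ, SyncT T τ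

/-- Restriction of an indexed word over `Σ ∪ {•}` to its `Σ`-indexed letters. -/
def restrictSigma {α : Type} (τ : List (Option α × ℕ)) : List (α × ℕ) :=
  τ.filterMap (fun x => x.1.map (fun a => (a, x.2)))

/-- `G'` is a sync-point instrumentation of `G`: erasing `•` from the traces of
`G'` yields exactly the traces of `G`, injectively. -/
structure SyncInstr {α : Type} (G : CFG α) (G' : CFG (Option α)) : Prop where
  proj_traces : G.traces = (fun τ => τ.filterMap id) '' G'.traces
  proj_inj : ∀ τ₁ ∈ G'.traces, ∀ τ₂ ∈ G'.traces, τ₁.filterMap id = τ₂.filterMap id → τ₁ = τ₂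

/-- Well-formedness of a CFG over `Σ ∪ {•}` (every action of `Σ` labels at most
one edge; `•` may label several edges). -/
def CFG.WFsync {α : Type} (G' : CFG (Option α)) : Prop :=
  G'.EdgeFinite ∧ G'.Reachable ∧ ∀ a : α, G'.UniqueAct (some a)

/-- The language `L(G, G')` of the sync-point instrumented program. -/
def instrLang {α : Type} (G' : CFG (Option α)) : Set (List (α × ℕ)) :=
  { τ | ∃ τ' : List (Option α × ℕ), τ = restrictSigma τ' ∧ SyncBullet τ' ∧
      ∀ i : ℕ, projThread i τ' ∈ G'.traces ∨ projThread i τ' = [] }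

/-- `|w|_•` : the number of occurrences of the sync-point symbol in `w`. -/
def bulletCount {α : Type} (w : List (Option α)) : ℕ := (w.filter (fun x => x.isNone)).length

/-- The phase order `⤳`: `a` can occur in a strictly later phase than `b` in
some execution of the instrumented program. -/
def PhaseOrder {α : Type} (G' : CFG (Option α)) (a b : α) : Prop :=
  ∃ τ' : List (Option α × ℕ), SyncBullet τ' ∧ restrictSigma τ' ∈ instrLang G' ∧
    ∃ i j : ℕ, i ≠ j ∧
      ∃ τ₁ σ₁, projThread i τ' = τ₁ ++ some a :: σ₁ ∧
      ∃ τ₂ σ₂, projThread j τ' = τ₂ ++ some b :: σ₂ ∧ bulletCount τ₁ < bulletCount τ₂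

/-! ### General synchronization alphabets -/

/-- A synchronization alphabet: a set `σs` of synchronization actions together
with a predicate `Φ` on indexed words over `Σ ∪ S`, preserved by all
permutations of thread indices. -/
structure SyncAlphabet (α σs : Type) where
  Φ : List ((α ⊕ σs) × ℕ) → Prop
  perm_inv : ∀ (π : Equiv.Perm ℕ) (τ : List ((α ⊕ σs) × ℕ)),
      Φ τ → Φ (τ.map (fun x => (x.1, π x.2)))

/-- Restriction of an indexed word over `Σ ∪ S` to its `Σ`-indexed letters. -/
def restrictActions {α σs : Type} (τ' : List ((α ⊕ σs) × ℕ)) : List (α × ℕ) :=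
  τ'.filterMap (fun x => (x.1.getLeft?).map (fun a => (a, x.2)))

/-- The language of the parameterized program `P = ((S, Φ), G)`. -/
def syncLang {α σs : Type} (SA : SyncAlphabet α σs) (G : CFG (α ⊕ σs)) :
    Set (List (α × ℕ)) :=
  { τ | ∃ τ', τ = restrictActions τ' ∧ SA.Φ τ' ∧
      ∀ i : ℕ, projThread i τ' ∈ G.traces ∨ projThread i τ' = [] }

/-- The configuration `C` is coverable in `P = ((S, Φ), G)`. -/
def Coverable {α σs : Type} (SA : SyncAlphabet α σs) (G : CFG (α ⊕ σs))
    {r : ℕ} (C : Fin r → G.Loc) : Prop :=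
  ∃ (τ' : List ((α ⊕ σs) × ℕ)) (t : Fin r → ℕ), SA.Φ τ' ∧ Function.Injective t ∧
    ∀ k, PathRel G.Edge G.init (projThread (t k) τ') (C k)

/-- Well-formedness of a CFG over `Σ ∪ S` (only actions of `Σ` are required to
label at most one edge). -/
def CFG.WFsum {α σs : Type} (G : CFG (α ⊕ σs)) : Prop :=
  G.EdgeFinite ∧ G.Reachable ∧ ∀ a : α, G.UniqueAct (Sum.inl a)

/-! ### Locks -/

/-- The valid projections of a lock-respecting execution to a single lock `m`:
a sequence of blocks `⟨acq(m) rel(m) : i⟩`, optionally followed by a single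
`⟨acq(m) : i⟩`.  `true` stands for `acq(m)`, `false` for `rel(m)`. -/
inductive LockSeq : List (Bool × ℕ) → Prop
  | nil : LockSeq []
  | final (i : ℕ) : LockSeq [(true, i)]
  | block (i : ℕ) {w : List (Bool × ℕ)} : LockSeq w → LockSeq ((true, i) :: (false, i) :: w)

/-- Projection of an indexed word over `Σ ∪ S_lk` to the indexed occurrences of
`acq(m)`/`rel(m)` for the lock `m`. -/
def lockProj {α M : Type} [DecidableEq M] (m : M) (τ' : List ((α ⊕ (M × Bool)) × ℕ)) :
    List (Bool × ℕ) :=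
  τ'.filterMap (fun x => match x.1 with
    | Sum.inl _ => none
    | Sum.inr p => if p.1 = m then some (p.2, x.2) else none)

/-- The lock synchronization predicate `sync_lk`. -/
def SyncLk {α M : Type} [DecidableEq M] (τ' : List ((α ⊕ (M × Bool)) × ℕ)) : Prop :=
  ∀ m : M, LockSeq (lockProj m τ')

/-- The language of a program `P = ((S_lk, sync_lk), G)` with locks. -/
def lockLang {α M : Type} [DecidableEq M] (G : CFG (α ⊕ (M × Bool))) :
    Set (List (α × ℕ)) :=
  { τ | ∃ τ', τ = restrictActions τ' ∧ SyncLk τ' ∧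
      ∀ i : ℕ, projThread i τ' ∈ G.traces ∨ projThread i τ' = [] }

/-- Coverability of a configuration in a program with locks. -/
def CoverableLk {α M : Type} [DecidableEq M] (G : CFG (α ⊕ (M × Bool)))
    {r : ℕ} (C : Fin r → G.Loc) : Prop :=
  ∃ (τ' : List ((α ⊕ (M × Bool)) × ℕ)) (t : Fin r → ℕ), SyncLk τ' ∧ Function.Injective t ∧
    ∀ k, PathRel G.Edge G.init (projThread (t k) τ') (C k)

/-! ### Locks and sync-points combined -/

/-- Restriction of an indexed word over `Σ ∪ S_lk ∪ {•}` to `(Σ ∪ S_lk)`-indexed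
letters. -/
def restrictSyncWord {α M : Type} (τ' : List (Option (α ⊕ (M × Bool)) × ℕ)) :
    List ((α ⊕ (M × Bool)) × ℕ) :=
  τ'.filterMap (fun x => x.1.map (fun e => (e, x.2)))

/-- Restriction of an indexed word over `Σ ∪ S_lk ∪ {•}` to `(Σ ∪ {•})`-indexed
letters. -/
def restrictBulletWord {α M : Type} (τ' : List (Option (α ⊕ (M × Bool)) × ℕ)) :
    List (Option α × ℕ) :=
  τ'.filterMap (fun x => match x.1 with
    | none => some ((none : Option α), x.2)
    | some (Sum.inl a) => some (some a, x.2)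
    | some (Sum.inr _) => none)

/-- Restriction of an indexed word over `Σ ∪ S_lk ∪ {•}` to `Σ`-indexed letters. -/
def restrictActionsO {α M : Type} (τ' : List (Option (α ⊕ (M × Bool)) × ℕ)) :
    List (α × ℕ) :=
  τ'.filterMap (fun x => match x.1 with
    | some (Sum.inl a) => some (a, x.2)
    | _ => none)

/-- The language `L(P̂, G')` of a lock program instrumented with sync-points. -/
def instrLockLang {α M : Type} [DecidableEq M] (G' : CFG (Option (α ⊕ (M × Bool)))) :
    Set (List (α × ℕ)) :=
  { τ | ∃ τ', τ = restrictActionsO τ' ∧ SyncLk (restrictSyncWord τ') ∧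
      SyncBullet (restrictBulletWord τ') ∧
      ∀ i : ℕ, projThread i τ' ∈ G'.traces ∨ projThread i τ' = [] }

/-- Projection of a pure lock execution to the indexed `acq`/`rel` occurrences of a single
lock `m` (`true` = acquire, `false` = release). -/
def lockProj16 {L : Type} [DecidableEq L] (m : L) (τ' : List ((L × Bool) × ℕ)) :
    List (Bool × ℕ) :=
  τ'.filterMap (fun x => if x.1.1 = m then some (x.1.2, x.2) else none)

/-- The lock synchronization predicate `sync_lk` for pure lock executions. -/
def SyncLk16 {L : Type} [DecidableEq L] (τ' : List ((L × Bool) × ℕ)) : Prop :=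
  ∀ m : L, LockSeq (lockProj16 m τ')

/-- Negation of a literal (a literal is a propositional variable with a polarity;
`¬¬x` is identified with `x`). -/
def negLit {V : Type} (l : V × Bool) : V × Bool := (l.1, !l.2)

/-- The complete run of thread `i` (out of `n`) that chooses literal `l`:
acquire `m_i^l`, then, for each `j ≠ i` in increasing order of `j`, acquire and release
`m_j^{¬l}`.  Locks are pairs `(literal, index)`; `((l, j), true)` is `acq(m_j^l)` and
`((l, j), false)` is `rel(m_j^l)`. -/
def runWord {V : Type} (n i : ℕ) (l : V × Bool) : List (((V × Bool) × ℕ) × Bool) :=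
  ((l, i), true) ::
    ((List.range n).filter (fun j => j != i)).flatMap
      (fun j => [((negLit l, j), true), ((negLit l, j), false)])

/-
Thread `i` keeps the lock `m_i^{l_i}` of its chosen literal forever, and acquires and releases
the lock `m_j^{¬l_i}` of every other thread `j`. If two threads chose complementary literals,
`l_j = ¬l_i`, then each of them releases the other's permanently held lock before that lock is
acquired, but only after acquiring its own: the four events `acq_i(m_i^{l_i})`,
`rel_i(m_j^{l_j})`, `acq_j(m_j^{l_j})`, `rel_j(m_i^{l_i})` would form a cycle in the execution.
Hence the chosen literals are consistent and define a satisfying assignment. Conversely, if each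
thread chooses a literal that is true under a fixed assignment, no thread touches a lock that
another one keeps, so running the threads one after the other respects every lock.
-/

open List

namespace List

variable {α β : Type*}

-- Events of an execution are ordered by `[x, y] <+ l`; chaining through `y` is only sound when
-- `y` occurs once.
theorem pair_sublist_trans {x y z : α} {l : List α} (hxy : [x, y] <+ l) (hyz : [y, z] <+ l)
    (hy : ¬[y, y] <+ l) : [x, z] <+ l := by
  induction l with
  | nil => simp at hxy
  | cons c l ih =>
    have hz : z ∈ l := by
      rcases sublist_cons_iff.mp hyz with h | ⟨r, hr, h⟩
      · exact h.subset (by simp)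
      · obtain ⟨-, rfl⟩ := cons.inj hr
        simpa using h
    rcases sublist_cons_iff.mp hxy with h | ⟨r, hr, -⟩
    · rcases sublist_cons_iff.mp hyz with h' | ⟨r', hr', -⟩
      · exact (ih h h' fun hyy => hy (hyy.cons c)).cons c
      · obtain ⟨rfl, -⟩ := cons.inj hr'
        exact absurd ((singleton_sublist.mpr (h.subset (by simp))).cons_cons y) hy
    · obtain ⟨rfl, -⟩ := cons.inj hr
      exact (singleton_sublist.mpr hz).cons_cons x

theorem exists_pair_sublist_of_pair_sublist_filterMap {f : α → Option β} {l : List α} {p q : β}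
    (h : [p, q] <+ l.filterMap f) : ∃ x y, [x, y] <+ l ∧ f x = some p ∧ f y = some q := by
  obtain ⟨L₁, L₂, hL, hp, hq⟩ := cons_sublist_iff.mp h
  obtain ⟨l₁, l₂, rfl, rfl, rfl⟩ := filterMap_eq_append_iff.mp hL
  obtain ⟨x, hx, hfx⟩ := mem_filterMap.mp hp
  obtain ⟨y, hy, hfy⟩ := mem_filterMap.mp (singleton_sublist.mp hq)
  exact ⟨x, y, (singleton_sublist.mpr hx).append (singleton_sublist.mpr hy), hfx, hfy⟩

theorem flatMap_eq_of_forall_ne_eq_nil {l : List α} {f : α → List β} {a : α} (hl : l.Nodup)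
    (ha : a ∈ l) (h : ∀ x ∈ l, x ≠ a → f x = []) : l.flatMap f = f a := by
  obtain ⟨s, t, rfl⟩ := append_of_mem ha
  obtain ⟨has, hat⟩ : a ∉ s ∧ a ∉ t := by simpa using (nodup_cons.mp (nodup_middle.mp hl)).1
  have hs : s.flatMap f = [] := flatMap_eq_nil_iff.mpr fun x hx =>
    h x (by simp [hx]) (by rintro rfl; exact has hx)
  have ht : t.flatMap f = [] := flatMap_eq_nil_iff.mpr fun x hx =>
    h x (by simp [hx]) (by rintro rfl; exact hat hx)
  simp [hs, ht]

end List

section ThreadProjection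

variable {α β : Type} {a b : α} {j k : ℕ} {τ : List (α × ℕ)}

theorem mem_projThread : a ∈ projThread k τ ↔ (a, k) ∈ τ := by
  simp [projThread]

theorem pair_sublist_projThread_iff : [a, b] <+ projThread k τ ↔ [(a, k), (b, k)] <+ τ := by
  constructor
  · intro h
    obtain ⟨l', hl', hab⟩ := sublist_map_iff.mp h
    have hk : ∀ x ∈ l', x.2 = k := fun x hx => by simpa using (mem_filter.mp (hl'.subset hx)).2
    rcases l' with _ | ⟨⟨a', i⟩, _ | ⟨⟨b', i'⟩, _ | _⟩⟩ <;>
      simp only [map_cons, map_nil, cons.injEq, reduceCtorEq, and_false] at hab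
    obtain ⟨rfl, rfl, -⟩ := hab
    obtain ⟨rfl, rfl⟩ : i = k ∧ i' = k := ⟨hk (a, i) (by simp), hk (b, i') (by simp)⟩
    exact hl'.trans filter_sublist
  · intro h
    simpa [projThread] using (h.filter (fun x => x.2 == k)).map Prod.fst

theorem projThread_map (w : List α) : projThread k (w.map (·, j)) = if j = k then w else [] := by
  by_cases h : j = k <;> simp [projThread, h, filter_map, Function.comp_def]

theorem projThread_flatMap (l : List β) (f : β → List (α × ℕ)) :
    projThread k (l.flatMap f) = l.flatMap fun b => projThread k (f b) := by
  simp [projThread, filter_flatMap, map_flatMap]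

end ThreadProjection

section LockProjection

variable {L β : Type} [DecidableEq L] {m m' : L} {b : Bool} {k : ℕ} {τ : List ((L × Bool) × ℕ)}

theorem mem_lockProj16 : (b, k) ∈ lockProj16 m τ ↔ ((m, b), k) ∈ τ := by
  simp [lockProj16]

theorem pair_sublist_of_pair_sublist_lockProj16 {b₁ b₂ : Bool} {k₁ k₂ : ℕ}
    (h : [(b₁, k₁), (b₂, k₂)] <+ lockProj16 m τ) : [((m, b₁), k₁), ((m, b₂), k₂)] <+ τ := by
  have hinv : ∀ {x : (L × Bool) × ℕ} {b : Bool} {k : ℕ},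
      (if x.1.1 = m then some (x.1.2, x.2) else none) = some (b, k) → x = ((m, b), k) := by
    rintro ⟨⟨m', b'⟩, k'⟩ b k hx
    by_cases h : m' = m <;> simp_all
  obtain ⟨x, y, hxy, hx, hy⟩ := exists_pair_sublist_of_pair_sublist_filterMap h
  rwa [hinv hx, hinv hy] at hxy

theorem lockProj16_cons :
    lockProj16 m (((m', b), k) :: τ) =
      if m' = m then (b, k) :: lockProj16 m τ else lockProj16 m τ := by
  by_cases h : m' = m <;> simp [lockProj16, h]

theorem lockProj16_flatMap (l : List β) (f : β → List ((L × Bool) × ℕ)) :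
    lockProj16 m (l.flatMap f) = l.flatMap fun b => lockProj16 m (f b) :=
  filterMap_flatMap

end LockProjection

namespace LockSeq

theorem pair_sublist_of_not_released {w : List (Bool × ℕ)} {i j : ℕ} (hw : LockSeq w)
    (hacq : (true, i) ∈ w) (hrel : (false, i) ∉ w) (hrel' : (false, j) ∈ w) :
    [(false, j), (true, i)] <+ w := by
  induction hw with
  | nil => simp at hacq
  | final k => simp at hrel'
  | @block k w hw ih =>
    have hik : i ≠ k := by rintro rfl; simp at hrel
    have hacq' : (true, i) ∈ w := by simpa [hik] using hacq
    rcases mem_cons.mp (mem_cons.mp hrel' |>.resolve_left (by simp)) with h | h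
    · rw [h]
      exact ((singleton_sublist.mpr hacq').cons_cons _).cons _
    · exact ((ih hacq' (fun h' => hrel (by simp [h'])) h).cons _).cons _

-- An even-length lock sequence ends with the lock free.
theorem append {u v : List (Bool × ℕ)} (hu : LockSeq u) (heven : Even u.length)
    (hv : LockSeq v) : LockSeq (u ++ v) := by
  induction hu with
  | nil => exact hv
  | final i => simp at heven
  | block i _ ih => exact .block i (ih (by simpa [parity_simps] using heven))

theorem flatMap {β : Type} {S : List β} {f : β → List (Bool × ℕ)}
    (h : ∀ b ∈ S, LockSeq (f b) ∧ Even (f b).length) :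
    LockSeq (S.flatMap f) ∧ Even (S.flatMap f).length := by
  induction S with
  | nil => exact ⟨.nil, Even.zero⟩
  | cons b S ih =>
    obtain ⟨hb, hbeven⟩ := h b mem_cons_self
    obtain ⟨hS, hSeven⟩ := ih fun b' hb' => h b' (mem_cons_of_mem b hb')
    rw [flatMap_cons, length_append]
    exact ⟨hb.append hbeven hS, hbeven.add hSeven⟩

end LockSeq

section Runs

variable {V : Type} {n i j : ℕ} {l : V × Bool}

theorem negLit_negLit (l : V × Bool) : negLit (negLit l) = l := by
  simp [negLit]

theorem negLit_ne (l : V × Bool) : negLit l ≠ l := by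
  simp [negLit, Prod.ext_iff]

theorem pair_sublist_runWord (hj : j < n) (hji : j ≠ i) (b : Bool) :
    [((l, i), true), ((negLit l, j), b)] <+ runWord n i l :=
  (singleton_sublist.mpr (by simpa using ⟨j, ⟨hj, hji⟩, by cases b <;> simp⟩)).cons_cons _

theorem rel_not_mem_runWord : ((l, i), false) ∉ runWord n i l := by
  simp [runWord, negLit]

theorem nodup_runWord : (runWord n i l).Nodup := by
  simp only [runWord, nodup_cons, nodup_flatMap]
  refine ⟨by simp [negLit], by simp, (nodup_range.filter _).imp fun hne => ?_⟩
  simp [Function.onFun, hne.symm]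

theorem not_pair_self_sublist_of_projThread_eq_runWord
    {τ : List ((((V × Bool) × ℕ) × Bool) × ℕ)} (hi : projThread i τ = runWord n i l)
    (x : ((V × Bool) × ℕ) × Bool) : ¬[(x, i), (x, i)] <+ τ := by
  rw [← pair_sublist_projThread_iff, hi]
  exact nodup_iff_sublist.mp nodup_runWord x

theorem lockProj16_map_runWord [DecidableEq V] (m : (V × Bool) × ℕ) :
    lockProj16 m ((runWord n i l).map (·, i)) =
      (if (l, i) = m then [(true, i)] else []) ++ ((range n).filter (· != i)).flatMap
        fun j => if (negLit l, j) = m then [(true, i), (false, i)] else [] := by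
  simp only [runWord, map_cons, map_flatMap, map_nil, lockProj16_flatMap, lockProj16_cons]
  split_ifs <;> rfl

end Runs

namespace SyncLk16

variable {V : Type} [DecidableEq V] {n i j : ℕ} {l : V × Bool}
  {τ : List ((((V × Bool) × ℕ) × Bool) × ℕ)}

theorem release_before_held_acquire (hτ : SyncLk16 τ) (hi : projThread i τ = runWord n i l)
    (hj : ((l, i), false) ∈ projThread j τ) :
    [(((l, i), false), j), (((l, i), true), i)] <+ τ := by
  refine pair_sublist_of_pair_sublist_lockProj16
    ((hτ (l, i)).pair_sublist_of_not_released ?_ ?_ ?_)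
  · rw [mem_lockProj16, ← mem_projThread, hi]
    exact mem_cons_self
  · rw [mem_lockProj16, ← mem_projThread, hi]
    exact rel_not_mem_runWord
  · rwa [mem_lockProj16, ← mem_projThread]

theorem not_complementary_runs (hτ : SyncLk16 τ) (hin : i < n) (hjn : j < n)
    (hi : projThread i τ = runWord n i l) (hj : projThread j τ = runWord n j (negLit l)) :
    False := by
  have hij : i ≠ j := by
    rintro rfl
    exact negLit_ne l (by simpa using (cons.inj (hj.symm.trans hi)).1)
  have hacqI_relI : [(((l, i), true), i), (((negLit l, j), false), i)] <+ τ :=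
    pair_sublist_projThread_iff.mp (hi ▸ pair_sublist_runWord hjn hij.symm false)
  have hacqJ_relJ : [(((negLit l, j), true), j), (((l, i), false), j)] <+ τ := by
    have := pair_sublist_runWord (l := negLit l) hin hij false
    rw [negLit_negLit, ← hj] at this
    exact pair_sublist_projThread_iff.mp this
  have hrelJ_acqI := hτ.release_before_held_acquire (j := j) hi
    (mem_projThread.mpr (hacqJ_relJ.subset (by simp)))
  have hrelI_acqJ := hτ.release_before_held_acquire (j := i) hj
    (mem_projThread.mpr (hacqI_relI.subset (by simp)))
  have hI := not_pair_self_sublist_of_projThread_eq_runWord hi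
  have hJ := not_pair_self_sublist_of_projThread_eq_runWord hj
  exact hI _ <| pair_sublist_trans (pair_sublist_trans (pair_sublist_trans
    hacqI_relI hrelI_acqJ (hI _)) hacqJ_relJ (hJ _)) hrelJ_acqI (hJ _)

end SyncLk16

theorem exists_assignment_of_forall_ne_negLit {ι V : Type} {l : ι → V × Bool}
    (h : ∀ i j, l j ≠ negLit (l i)) : ∃ ρ : V → Bool, ∀ i, ρ (l i).1 = (l i).2 := by
  classical
  refine ⟨fun v => decide (∃ i, l i = (v, true)), fun i => ?_⟩
  cases hb : (l i).2
  · simp only [decide_eq_false_iff_not, not_exists]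
    exact fun j hj => h i j (hj.trans (by simp [negLit, hb]))
  · exact decide_eq_true ⟨i, Prod.ext rfl hb⟩

section SequentialRun

variable {V : Type} {n : ℕ} {L : Fin n → V × Bool}

def sequentialRun (n : ℕ) (L : Fin n → V × Bool) : List ((((V × Bool) × ℕ) × Bool) × ℕ) :=
  (finRange n).flatMap fun i : Fin n => (runWord n i (L i)).map (·, (i : ℕ))

theorem projThread_sequentialRun (k : Fin n) :
    projThread k (sequentialRun n L) = runWord n k (L k) := by
  simp only [sequentialRun, projThread_flatMap, projThread_map]
  rw [flatMap_eq_of_forall_ne_eq_nil (nodup_finRange n) (mem_finRange k)]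
  · exact if_pos rfl
  · exact fun x _ hx => if_neg (Fin.val_injective.ne hx)

theorem projThread_sequentialRun_of_le {k : ℕ} (hk : n ≤ k) :
    projThread k (sequentialRun n L) = [] := by
  simp only [sequentialRun, projThread_flatMap, projThread_map]
  exact flatMap_eq_nil_iff.mpr fun x _ => if_neg (x.isLt.trans_le hk).ne

theorem syncLk16_sequentialRun [DecidableEq V] (hL : ∀ i j, L j ≠ negLit (L i)) :
    SyncLk16 (sequentialRun n L) := by
  intro m
  simp only [sequentialRun, lockProj16_flatMap, lockProj16_map_runWord]
  by_cases hheld : ∃ x : Fin n, (L x, (x : ℕ)) = m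
  · obtain ⟨x₀, rfl⟩ := hheld
    have hloop : ∀ x : Fin n, ((range n).filter (· != (x : ℕ))).flatMap
        (fun j => if (negLit (L x), j) = (L x₀, (x₀ : ℕ)) then [(true, (x : ℕ)), (false, x)]
          else []) = [] :=
      fun x => flatMap_eq_nil_iff.mpr fun j _ => if_neg fun h => hL x x₀ (congrArg Prod.fst h).symm
    simp only [hloop, append_nil]
    rw [flatMap_eq_of_forall_ne_eq_nil (nodup_finRange n) (mem_finRange x₀)]
    · rw [if_pos rfl]
      exact .final x₀
    · intro x _ hx
      simp [Fin.val_injective.ne hx]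
  · simp only [not_exists] at hheld
    refine (LockSeq.flatMap fun x _ => ?_).1
    rw [if_neg (hheld x), nil_append]
    refine LockSeq.flatMap fun j _ => ?_
    split_ifs
    · exact ⟨.block _ .nil, by simp⟩
    · exact ⟨.nil, Even.zero⟩

end SequentialRun

/-- Correctness of the 3-SAT-to-lock-coverability construction.
For a 3-CNF formula with clauses `Cl i` (each a triple of literals): there is an
interleaved execution `τ'` of the `n` threads respecting the lock semantics, in which
each thread `i < n` completes the run of thread `i` for some literal of clause `i`
(and no other thread acts), iff the formula is satisfiable. -/
theorem stmt_16 {V : Type} [DecidableEq V] (n : ℕ)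
    (Cl : Fin n → (V × Bool) × (V × Bool) × (V × Bool)) :
    (∃ τ' : List ((((V × Bool) × ℕ) × Bool) × ℕ),
        SyncLk16 τ' ∧
        (∀ i : Fin n, ∃ l : V × Bool,
            (l = (Cl i).1 ∨ l = (Cl i).2.1 ∨ l = (Cl i).2.2) ∧
            projThread (i : ℕ) τ' = runWord n (i : ℕ) l) ∧
        (∀ j : ℕ, n ≤ j → projThread j τ' = [])) ↔
      ∃ ρ : V → Bool, ∀ i : Fin n, ∃ l : V × Bool,
        (l = (Cl i).1 ∨ l = (Cl i).2.1 ∨ l = (Cl i).2.2) ∧ ρ l.1 = l.2 := by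
  constructor
  · rintro ⟨τ, hτ, hrun, -⟩
    choose l hl hproj using hrun
    obtain ⟨ρ, hρ⟩ := exists_assignment_of_forall_ne_negLit fun i j hji =>
      hτ.not_complementary_runs i.isLt j.isLt (hproj i) (hji ▸ hproj j)
    exact ⟨ρ, fun i => ⟨l i, hl i, hρ i⟩⟩
  · rintro ⟨ρ, hρ⟩
    choose L hL hρL using hρ
    have hcons : ∀ i j, L j ≠ negLit (L i) := fun i j hji => by
      simpa [hji, negLit, hρL i] using hρL j
    exact ⟨sequentialRun n L, syncLk16_sequentialRun hcons,
      fun i => ⟨L i, hL i, projThread_sequentialRun i⟩,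
      fun j hj => projThread_sequentialRun_of_le hj⟩
end

section
/- (Coverability in lock programs needs no extra threads.) Let G be a CFG over Σ ∪ S_lk, P = ((S_lk, sync_lk), G), and C = [ℓ₁,…,ℓ_n] a configuration. Then C is coverable in P if and only if there exists a witnessing word τ̂ of indexed actions over Σ ∪ S_lk with sync_lk(τ̂) and distinct threads t₁,…,t_n such that τ̂↑t_r labels a path in G from ℓ_init to ℓ_r for each r, and moreover τ̂↑i = ε for every thread i ∉ {t₁,…,t_n} (i.e., only the n covering threads perform any actions). -/
/-- Filtering by a thread predicate commutes with `lockProj`. -/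
lemma lockProj_filter {α M : Type} [DecidableEq M] (m : M) (q : ℕ → Bool)
    (τ : List ((α ⊕ (M × Bool)) × ℕ)) :
    lockProj m (τ.filter (fun x => q x.2)) = (lockProj m τ).filter (fun y => q y.2) := by
  induction τ with
  | nil => rfl
  | cons x τ ih =>
    rcases x with ⟨e, i⟩
    by_cases hq : q i
    · rw [List.filter_cons_of_pos (by simpa using hq)]
      cases e with
      | inl a => simpa [lockProj] using ih
      | inr p =>
        by_cases hm : p.1 = m
        · simp [lockProj, hm, List.filter_cons, hq] at ih ⊢; exact ih
        · simp [lockProj, hm] at ih ⊢; exact ih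
    · rw [List.filter_cons_of_neg (by simpa using hq)]
      cases e with
      | inl a => simpa [lockProj] using ih
      | inr p =>
        by_cases hm : p.1 = m
        · simp [lockProj, hm, List.filter_cons, hq] at ih ⊢; exact ih
        · simp [lockProj, hm] at ih ⊢; exact ih

/-- Filtering whole threads out of a lock sequence yields a lock sequence. -/
lemma LockSeq.filter (q : ℕ → Bool) {w : List (Bool × ℕ)} (h : LockSeq w) :
    LockSeq (w.filter (fun y => q y.2)) := by
  induction h with
  | nil => exact LockSeq.nil
  | final i =>
    by_cases hq : q i
    · simpa [List.filter, hq] using LockSeq.final i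
    · simp only [List.filter_cons, hq]; simpa using LockSeq.nil
  | block i hw ih =>
    by_cases hq : q i
    · simp only [List.filter_cons, hq]
      simpa using LockSeq.block i ih
    · simp only [List.filter_cons, hq]
      simpa using ih

/-- Thread projection after filtering by a thread predicate. -/
lemma projThread_filter {α : Type} (q : ℕ → Bool) (i : ℕ) (τ : List (α × ℕ)) :
    projThread i (τ.filter (fun x => q x.2)) =
      if q i then projThread i τ else [] := by
  induction τ with
  | nil => simp [projThread]
  | cons x τ ih =>
    rcases x with ⟨a, j⟩
    by_cases hq : q j <;> by_cases hj : j = i <;>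
      simp_all [projThread, List.filter_cons]

/-- Coverability in lock programs needs no extra threads.
A configuration `C` is coverable in a program with locks iff there is a witnessing
execution in which only the `n` covering threads perform any actions. -/
theorem stmt_18 {α M : Type} [DecidableEq M] (G : CFG (α ⊕ (M × Bool)))
    (hG : G.WFsum) {n : ℕ} (C : Fin n → G.Loc) :
    CoverableLk G C ↔
      ∃ (τ' : List ((α ⊕ (M × Bool)) × ℕ)) (t : Fin n → ℕ),
        SyncLk τ' ∧ Function.Injective t ∧
        (∀ k, PathRel G.Edge G.init (projThread (t k) τ') (C k)) ∧
        (∀ i : ℕ, (∀ k, t k ≠ i) → projThread i τ' = []) := by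
  constructor
  · rintro ⟨τ', t, hsync, hinj, hpath⟩
    classical
    set q : ℕ → Bool := fun i => decide (∃ k, t k = i) with hq
    refine ⟨τ'.filter (fun x => q x.2), t, ?_, hinj, ?_, ?_⟩
    · intro m
      rw [lockProj_filter]
      exact (hsync m).filter q
    · intro k
      have hqk : q (t k) = true := by simp [hq]
      rw [projThread_filter, hqk, if_pos rfl]
      exact hpath k
    · intro i hi
      have hqi : q i = false := by
        simp only [hq, decide_eq_false_iff_not]
        rintro ⟨k, rfl⟩
        exact hi k rfl
      rw [projThread_filter, hqi]
      simp
  · rintro ⟨τ', t, hsync, hinj, hpath, _⟩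
    exact ⟨τ', t, hsync, hinj, hpath⟩
end
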